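/- arXiv:1908.04358 — 2 statements merged into one kernel-verified Lean document; each statement's English description precedes it below -/
import Mathlib

section
/- Let A be a weighted directed graph on n vertices that is simply forward influenced, and suppose s : Fin n → ℝ satisfies M̃.mulVec s = d̃ (s is a trophic level vector). Then the total edge weight W = ∑ i, ∑ j, A i j is positive and the edge-weighted mean of the trophic differences equals 1, i.e. (∑ i, ∑ j, A i j * (s j − s i)) / W = 1. -/
open Matrix BigOperators

noncomputable section

variable {n : ℕ}

/-- Weighted in-degree vector. -/
def indeg (A : Matrix (Fin n) (Fin n) ℝ) (j : Fin n) : ℝ := ∑ i, A i j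

/-- Weighted out-degree vector. -/
def outdeg (A : Matrix (Fin n) (Fin n) ℝ) (i : Fin n) : ℝ := ∑ j, A i j

/-- Weighted in-degree Laplacian `L = diag d - A`. -/
def inLap (A : Matrix (Fin n) (Fin n) ℝ) : Matrix (Fin n) (Fin n) ℝ :=
  Matrix.diagonal (indeg A) - A

/-- Reachability: reflexive-transitive closure of the edge relation. -/
def Reaches (A : Matrix (Fin n) (Fin n) ℝ) : Fin n → Fin n → Prop :=
  Relation.ReflTransGen fun i j => 0 < A i j

/-- Weak connectivity. -/
def WeaklyConnected (A : Matrix (Fin n) (Fin n) ℝ) : Prop :=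
  ∀ i j : Fin n, Relation.ReflTransGen (fun i j => 0 < A i j ∨ 0 < A j i) i j

/-- Strong connectivity. -/
def StronglyConnected (A : Matrix (Fin n) (Fin n) ℝ) : Prop :=
  ∀ i j : Fin n, Reaches A i j

/-- Simply forward influenced graph. -/
def SimplyForwardInfluenced (A : Matrix (Fin n) (Fin n) ℝ) : Prop :=
  (∃ i, indeg A i = 0) ∧ (∃ i, indeg A i ≠ 0) ∧
    ∀ j, indeg A j ≠ 0 → ∃ i, indeg A i = 0 ∧ Reaches A i j

/-- A set of vertices with no incoming edges from outside. -/
def InClosed (A : Matrix (Fin n) (Fin n) ℝ) (S : Finset (Fin n)) : Prop :=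
  ∀ i j : Fin n, i ∉ S → j ∈ S → A i j = 0

/-- Minimal source subgraph. -/
def MinSourceSubgraph (A : Matrix (Fin n) (Fin n) ℝ) (S : Finset (Fin n)) : Prop :=
  S.Nonempty ∧ InClosed A S ∧ ∀ T ⊆ S, T.Nonempty → T ≠ S → ¬ InClosed A T

/-- Total edge weight. -/
def totalWeight (A : Matrix (Fin n) (Fin n) ℝ) : ℝ := ∑ i, ∑ j, A i j

/-- `g` is a forward hierarchical level vector: a minimizer of `‖Lᵀ x - d‖₂`. -/
def IsFHL (A : Matrix (Fin n) (Fin n) ℝ) (g : Fin n → ℝ) : Prop :=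
  ∀ x : Fin n → ℝ,
    ∑ i, ((inLap A)ᵀ.mulVec g i - indeg A i) ^ 2 ≤
      ∑ i, ((inLap A)ᵀ.mulVec x i - indeg A i) ^ 2

/-- Forward democracy coefficient, computed from a forward hierarchical level vector `g`. -/
def etaF (A : Matrix (Fin n) (Fin n) ℝ) (g : Fin n → ℝ) : ℝ :=
  1 - (∑ i, ∑ j, A i j * (g j - g i)) / totalWeight A

/-- Forward influence centrality of a vertex, from a forward hierarchical level vector `g`. -/
def vF (A : Matrix (Fin n) (Fin n) ℝ) (g : Fin n → ℝ) (i : Fin n) : ℝ :=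
  if indeg A i = 0 then 1 else 1 - (∑ k, A k i * (g i - g k)) / indeg A i

/-- `b` is the orthogonal projection of `d` onto `ker L` (standard Euclidean inner product). -/
def IsProjKerL (A : Matrix (Fin n) (Fin n) ℝ) (b : Fin n → ℝ) : Prop :=
  (inLap A).mulVec b = 0 ∧
    ∀ x : Fin n → ℝ, (inLap A).mulVec x = 0 → ∑ i, (indeg A i - b i) * x i = 0

/- The `j`-th row of `M̃ s = d̃` reads `d̃ j * s j - ∑ i, A i j * s i = d̃ j`. At a non-source
`d̃ j = d j`, so the trophic differences into `j` sum to `d j`; at a source the column `j` of `A`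
vanishes and both sides are `0`. Summing over `j` gives `∑ j, d j = W`, and `W > 0` because some
vertex is not a source. -/

theorem Matrix.transpose_diagonal_sub_mulVec_apply {ι R : Type*} [Fintype ι] [DecidableEq ι]
    [CommRing R] (e : ι → R) (A : Matrix ι ι R) (s : ι → R) (j : ι) :
    ((diagonal e - A)ᵀ *ᵥ s) j = e j * s j - ∑ i, A i j * s i := by
  simp [mulVec, dotProduct, sub_mul, Finset.sum_sub_distrib, diagonal_apply]

section

variable {A : Matrix (Fin n) (Fin n) ℝ}

theorem indeg_nonneg (hA : ∀ i j, 0 ≤ A i j) (j : Fin n) : 0 ≤ indeg A j :=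
  Finset.sum_nonneg fun i _ => hA i j

theorem indeg_eq_zero_iff (hA : ∀ i j, 0 ≤ A i j) {j : Fin n} :
    indeg A j = 0 ↔ ∀ i, A i j = 0 := by
  simp [indeg, Finset.sum_eq_zero_iff_of_nonneg fun i _ => hA i j]

theorem totalWeight_eq_sum_indeg (A : Matrix (Fin n) (Fin n) ℝ) :
    totalWeight A = ∑ j, indeg A j :=
  Finset.sum_comm

theorem totalWeight_pos (hA : ∀ i j, 0 ≤ A i j) (h : ∃ j, indeg A j ≠ 0) :
    0 < totalWeight A := by
  obtain ⟨j, hj⟩ := h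
  rw [totalWeight_eq_sum_indeg]
  exact Finset.sum_pos' (fun j _ => indeg_nonneg hA j)
    ⟨j, Finset.mem_univ j, (indeg_nonneg hA j).lt_of_ne' hj⟩

theorem sum_mul_sub_eq (A : Matrix (Fin n) (Fin n) ℝ) (s : Fin n → ℝ) (j : Fin n) :
    ∑ i, A i j * (s j - s i) = indeg A j * s j - ∑ i, A i j * s i := by
  simp only [mul_sub, Finset.sum_sub_distrib, indeg, Finset.sum_mul]

theorem sum_mul_sub_eq_indeg_of_mulVec_eq (hA : ∀ i j, 0 ≤ A i j) {s : Fin n → ℝ}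
    (hs : (diagonal (fun j => if 0 < indeg A j then indeg A j else 1) - A)ᵀ *ᵥ s
        = fun j => if 0 < indeg A j then indeg A j else 1)
    (j : Fin n) : ∑ i, A i j * (s j - s i) = indeg A j := by
  have hrow := congrFun hs j
  rw [transpose_diagonal_sub_mulVec_apply] at hrow
  rcases (indeg_nonneg hA j).lt_or_eq' with hpos | hzero
  · simp only [if_pos hpos] at hrow
    rwa [sum_mul_sub_eq]
  · have hcol := (indeg_eq_zero_iff hA).mp hzero
    simp [hzero, hcol]

theorem sum_sum_mul_sub_eq_totalWeight {s : Fin n → ℝ}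
    (h : ∀ j, ∑ i, A i j * (s j - s i) = indeg A j) :
    ∑ i, ∑ j, A i j * (s j - s i) = totalWeight A := by
  rw [Finset.sum_comm, totalWeight_eq_sum_indeg]
  exact Finset.sum_congr rfl fun j _ => h j

end

theorem stmt_4_general (A : Matrix (Fin n) (Fin n) ℝ)
    (hA : ∀ i j, 0 ≤ A i j)
    (hsfi : SimplyForwardInfluenced A) (s : Fin n → ℝ)
    (hs : (Matrix.diagonal (fun j => if 0 < indeg A j then indeg A j else 1) - A)ᵀ.mulVec s
        = fun j => if 0 < indeg A j then indeg A j else 1) :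
    0 < totalWeight A ∧ (∑ i, ∑ j, A i j * (s j - s i)) / totalWeight A = 1 := by
  have hW : 0 < totalWeight A := totalWeight_pos hA hsfi.2.1
  refine ⟨hW, ?_⟩
  rw [sum_sum_mul_sub_eq_totalWeight (sum_mul_sub_eq_indeg_of_mulVec_eq hA hs), div_self hW.ne']

theorem stmt_4 (hn : 0 < n) (A : Matrix (Fin n) (Fin n) ℝ)
    (hA : ∀ i j, 0 ≤ A i j) (hdiag : ∀ i, A i i = 0)
    (hsfi : SimplyForwardInfluenced A) (s : Fin n → ℝ)
    (hs : (Matrix.diagonal (fun j => if 0 < indeg A j then indeg A j else 1) - A)ᵀ.mulVec s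
        = fun j => if 0 < indeg A j then indeg A j else 1) :
    0 < totalWeight A ∧ (∑ i, ∑ j, A i j * (s j - s i)) / totalWeight A = 1 :=
  stmt_4_general A hA hsfi s hs
end
end

section
/- Let A be a weighted directed graph on n vertices that is weakly connected, let i be a vertex with d i > 0, and let b be the orthogonal projection of d onto the kernel of L. Then the forward influence centrality of i satisfies v_f(i) = b i / d i. -/
open Matrix BigOperators

noncomputable section

variable {n : ℕ}

/-
The residual `d - M g` of any least-squares solution is orthogonal to the range of `M = Lᵀ`, so it
lies in `ker Mᵀ = ker L`, while `d - (d - M g) = M g` lies in the range of `M`, which is orthogonal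
to `ker L`. Hence `d - M g` is the orthogonal projection `b` of `d` onto `ker L`, and its `i`-th
coordinate is `d i - ∑ k, A k i * (g i - g k)`.
-/

section LeastSquares

variable {m k : Type*} [Fintype m]

def IsOrthogonalProjKer (N : Matrix k m ℝ) (d b : m → ℝ) : Prop :=
  N *ᵥ b = 0 ∧ ∀ x : m → ℝ, N *ᵥ x = 0 → (d - b) ⬝ᵥ x = 0

theorem IsOrthogonalProjKer.unique {N : Matrix k m ℝ} {d b b' : m → ℝ}
    (hb : IsOrthogonalProjKer N d b) (hb' : IsOrthogonalProjKer N d b') : b = b' := by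
  have hker : N *ᵥ (b - b') = 0 := by rw [mulVec_sub, hb.1, hb'.1, sub_self]
  have hself : (b - b') ⬝ᵥ (b - b') = (d - b') ⬝ᵥ (b - b') - (d - b) ⬝ᵥ (b - b') := by
    rw [← sub_dotProduct, sub_sub_sub_cancel_left]
  rw [hb.2 _ hker, hb'.2 _ hker, sub_zero, dotProduct_self_eq_zero] at hself
  exact sub_eq_zero.mp hself

variable [Fintype k]

def IsLeastSquaresSol (M : Matrix m k ℝ) (d : m → ℝ) (g : k → ℝ) : Prop :=
  ∀ x : k → ℝ, ∑ i, ((M *ᵥ g) i - d i) ^ 2 ≤ ∑ i, ((M *ᵥ x) i - d i) ^ 2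

theorem IsLeastSquaresSol.residual_dotProduct_mulVec {M : Matrix m k ℝ} {d : m → ℝ} {g : k → ℝ}
    (hg : IsLeastSquaresSol M d g) (h : k → ℝ) : (M *ᵥ g - d) ⬝ᵥ M *ᵥ h = 0 := by
  set r := M *ᵥ g - d
  set u := M *ᵥ h
  have hexpand : ∀ t : ℝ, ∑ i, ((M *ᵥ (g + t • h)) i - d i) ^ 2 =
      r ⬝ᵥ r + (u ⬝ᵥ u * (t * t) + 2 * (r ⬝ᵥ u) * t) := fun t => by
    simp only [dotProduct, Finset.sum_mul, Finset.mul_sum, ← Finset.sum_add_distrib]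
    refine Finset.sum_congr rfl fun i _ => ?_
    simp only [r, u, mulVec_add, mulVec_smul, Pi.add_apply, Pi.sub_apply, Pi.smul_apply,
      smul_eq_mul]
    ring
  have hat_zero := hexpand 0
  simp only [zero_smul, add_zero, mul_zero] at hat_zero
  have hquad : ∀ t : ℝ, 0 ≤ u ⬝ᵥ u * (t * t) + 2 * (r ⬝ᵥ u) * t + 0 := fun t => by
    linarith [hg (g + t • h), hexpand t]
  -- a nonnegative quadratic `a t² + 2 c t` has discriminant `4 c² ≤ 0`
  have hdisc := discrim_le_zero hquad
  rw [discrim] at hdisc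
  nlinarith [sq_nonneg (r ⬝ᵥ u)]

theorem IsLeastSquaresSol.transpose_mulVec_residual {M : Matrix m k ℝ} {d : m → ℝ} {g : k → ℝ}
    (hg : IsLeastSquaresSol M d g) : Mᵀ *ᵥ (d - M *ᵥ g) = 0 := by
  rw [← dotProduct_self_eq_zero]
  nth_rewrite 1 [mulVec_transpose]
  rw [← dotProduct_mulVec, ← neg_sub, neg_dotProduct, hg.residual_dotProduct_mulVec, neg_zero]

theorem IsLeastSquaresSol.isOrthogonalProjKer {M : Matrix m k ℝ} {d : m → ℝ} {g : k → ℝ}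
    (hg : IsLeastSquaresSol M d g) : IsOrthogonalProjKer Mᵀ d (d - M *ᵥ g) := by
  refine ⟨hg.transpose_mulVec_residual, fun x hx => ?_⟩
  rw [sub_sub_cancel, dotProduct_comm, dotProduct_mulVec, ← mulVec_transpose, hx,
    zero_dotProduct]

end LeastSquares

theorem inLap_transpose_mulVec_apply (A : Matrix (Fin n) (Fin n) ℝ) (g : Fin n → ℝ) (i : Fin n) :
    ((inLap A)ᵀ *ᵥ g) i = ∑ k, A k i * (g i - g k) := by
  simp only [inLap, transpose_sub, diagonal_transpose, sub_mulVec, Pi.sub_apply, mulVec_diagonal,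
    mulVec_transpose, vecMul, dotProduct, indeg, mul_sub, Finset.sum_sub_distrib, Finset.sum_mul]
  simp only [mul_comm]

theorem stmt_15_general (A : Matrix (Fin n) (Fin n) ℝ)
    (i : Fin n) (hi : 0 < indeg A i)
    (g : Fin n → ℝ) (hg : IsFHL A g)
    (b : Fin n → ℝ) (hb : IsProjKerL A b) :
    vF A g i = b i / indeg A i := by
  have hres : IsOrthogonalProjKer (inLap A) (indeg A) (indeg A - (inLap A)ᵀ *ᵥ g) := by
    simpa only [transpose_transpose] using IsLeastSquaresSol.isOrthogonalProjKer hg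
  obtain rfl : b = indeg A - (inLap A)ᵀ *ᵥ g :=
    IsOrthogonalProjKer.unique (hb : IsOrthogonalProjKer (inLap A) (indeg A) b) hres
  rw [vF, if_neg hi.ne', Pi.sub_apply, inLap_transpose_mulVec_apply]
  field_simp

theorem stmt_15 (hn : 0 < n) (A : Matrix (Fin n) (Fin n) ℝ)
    (hA : ∀ i j, 0 ≤ A i j) (hdiag : ∀ i, A i i = 0)
    (hwc : WeaklyConnected A)
    (i : Fin n) (hi : 0 < indeg A i)
    (g : Fin n → ℝ) (hg : IsFHL A g)
    (b : Fin n → ℝ) (hb : IsProjKerL A b) :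
    vF A g i = b i / indeg A i :=
  stmt_15_general A i hi g hg b hb
end
end
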